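/- arXiv:1810.08265 — 4 statements merged into one kernel-verified Lean document; each statement's English description precedes it below -/
import Mathlib

section
/- Let A be an invertible n×n real matrix with inverse B. Then the symmetric part A_s of A is invertible if and only if the symmetric part B_s of B is invertible. -/
open Matrix

theorem IsUnit.mul_mul_iff {M : Type*} [Monoid M] {a b c : M} (ha : IsUnit a)
    (hb : IsUnit b) : IsUnit (a * c * b) ↔ IsUnit c := by
  rw [hb.mul_right_iff, ha.mul_left_iff]

theorem Matrix.inv_add_transpose_inv {n R : Type*} [Fintype n] [DecidableEq n] [CommRing R]
    {A : Matrix n n R} (hA : IsUnit A.det) : A⁻¹ + A⁻¹ᵀ = A⁻¹ * (A + Aᵀ) * A⁻¹ᵀ := by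
  rw [Matrix.mul_add, Matrix.add_mul, nonsing_inv_mul A hA, Matrix.one_mul, Matrix.mul_assoc,
    transpose_nonsing_inv, mul_nonsing_inv Aᵀ (by rwa [det_transpose]), Matrix.mul_one, add_comm]

/-- Fact II: for an invertible matrix `A` with inverse `B = A⁻¹`, the symmetric part
of `A` is invertible iff the symmetric part of `B` is invertible. -/
theorem fact_II {n : ℕ} (A : Matrix (Fin n) (Fin n) ℝ) (hA : IsUnit A) :
    IsUnit ((1/2 : ℝ) • (A + Aᵀ)) ↔ IsUnit ((1/2 : ℝ) • (A⁻¹ + (A⁻¹)ᵀ)) := by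
  have hA_inv : IsUnit A⁻¹ := isUnit_nonsing_inv_iff.2 hA
  rw [inv_add_transpose_inv ((isUnit_iff_isUnit_det A).1 hA), ← Matrix.smul_mul,
    ← Matrix.mul_smul, IsUnit.mul_mul_iff hA_inv ((isUnit_transpose _).2 hA_inv)]
end

section
/- Let ψ be a symmetric positive-definite n×n real matrix and C an antisymmetric n×n real matrix. Then det(I + ψ⁻¹ C) ≥ 1; in particular I + ψ⁻¹C, i.e. ψ + C, is invertible. -/
/-!
Write `ψ⁻¹ = Bᵀ B`. The Weinstein–Aronszajn identity `det (1 + X Y) = det (1 + Y X)` turns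
`det (1 + ψ⁻¹ C)` into `det (1 + A)` with `A = B C Bᵀ` antisymmetric. For antisymmetric `A`,
`(1 + A)ᵀ (1 + A) = 1 + Aᵀ A`, so `det (1 + A)² = det (1 + Aᵀ A) ≥ 1`. The same bound for `t A`
shows that `t ↦ det (1 + t A)` never vanishes; it equals `1` at `t = 0`, so `det (1 + A) > 0`,
hence `det (1 + A) ≥ 1`.
-/

open Matrix

namespace Matrix

variable {n : Type*} [Fintype n] [DecidableEq n]

open scoped MatrixOrder Pointwise in
theorem one_le_det_one_add_of_posSemidef {P : Matrix n n ℝ} (hP : P.PosSemidef) :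
    1 ≤ (1 + P).det := by
  have hH : (1 + P).IsHermitian := isHermitian_one.add hP.isHermitian
  rw [hH.det_eq_prod_eigenvalues]
  refine Finset.one_le_prod fun i _ => ?_
  have hmem : hH.eigenvalues i ∈ ({1} : Set ℝ) + spectrum ℝ P := by
    rw [spectrum.singleton_add_eq, map_one]
    exact hH.eigenvalues_mem_spectrum_real i
  obtain ⟨_, rfl, μ, hμ, hsum⟩ := hmem
  have hμ_nonneg : 0 ≤ μ := spectrum_nonneg_of_nonneg hP.nonneg hμ
  rw [RCLike.ofReal_real_eq_id, id, ← hsum]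
  linarith

theorem one_le_sq_det_one_add_of_transpose_eq_neg {A : Matrix n n ℝ} (hA : Aᵀ = -A) :
    1 ≤ (1 + A).det ^ 2 := by
  have hsq : (1 + A).det ^ 2 = (1 + Aᵀ * A).det := by
    rw [sq]
    nth_rewrite 1 [← det_transpose]
    rw [← det_mul, transpose_add, transpose_one, hA]
    congr 1
    noncomm_ring
  rw [hsq]
  exact one_le_det_one_add_of_posSemidef (posSemidef_conjTranspose_mul_self A)

theorem det_one_add_pos_of_transpose_eq_neg {A : Matrix n n ℝ} (hA : Aᵀ = -A) :
    0 < (1 + A).det := by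
  have hne : ∀ t : ℝ, (1 + t • A).det ≠ 0 := fun t h => by
    have := one_le_sq_det_one_add_of_transpose_eq_neg (A := t • A)
      (by rw [transpose_smul, hA, smul_neg])
    rw [h] at this
    norm_num at this
  have hcont : Continuous fun t : ℝ => (1 + t • A).det := by fun_prop
  by_contra! hle
  obtain ⟨t, -, ht⟩ := intermediate_value_Icc' zero_le_one hcont.continuousOn
    (show (0 : ℝ) ∈ Set.Icc _ _ from ⟨by simpa using hle, by simp⟩)
  exact hne t ht

theorem one_le_det_one_add_of_transpose_eq_neg {A : Matrix n n ℝ} (hA : Aᵀ = -A) :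
    1 ≤ (1 + A).det :=
  (one_le_sq_iff₀ (det_one_add_pos_of_transpose_eq_neg hA).le).1
    (one_le_sq_det_one_add_of_transpose_eq_neg hA)

open scoped MatrixOrder in
theorem one_le_det_one_add_mul_of_posSemidef_of_transpose_eq_neg {P C : Matrix n n ℝ}
    (hP : P.PosSemidef) (hC : Cᵀ = -C) : 1 ≤ (1 + P * C).det := by
  obtain ⟨B, rfl⟩ := CStarAlgebra.nonneg_iff_eq_star_mul_self.mp hP.nonneg
  rw [star_eq_conjTranspose, conjTranspose_eq_transpose_of_trivial, Matrix.mul_assoc,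
    det_one_add_mul_comm]
  refine one_le_det_one_add_of_transpose_eq_neg ?_
  rw [transpose_mul, transpose_mul, transpose_transpose, hC, Matrix.neg_mul, Matrix.mul_neg,
    Matrix.mul_assoc]

end Matrix

theorem det_one_add_inv_mul_antisymm_general {n : ℕ} (ψ C : Matrix (Fin n) (Fin n) ℝ)
    (hψ : ψ.PosDef) (hC : Cᵀ = -C) :
    1 ≤ (1 + ψ⁻¹ * C).det ∧ IsUnit (1 + ψ⁻¹ * C) ∧ IsUnit (ψ + C) := by
  have hle : 1 ≤ (1 + ψ⁻¹ * C).det :=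
    one_le_det_one_add_mul_of_posSemidef_of_transpose_eq_neg hψ.inv.posSemidef hC
  have hunit : IsUnit (1 + ψ⁻¹ * C) :=
    (isUnit_iff_isUnit_det _).2 (isUnit_iff_ne_zero.2 (by positivity))
  have hfactor : ψ * (1 + ψ⁻¹ * C) = ψ + C := by
    rw [Matrix.mul_add, Matrix.mul_one,
      mul_nonsing_inv_cancel_left _ _ ((isUnit_iff_isUnit_det ψ).1 hψ.isUnit)]
  exact ⟨hle, hunit, hfactor ▸ hψ.isUnit.mul hunit⟩

/-- If `ψ` is symmetric positive-definite and `C` is antisymmetric, then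
`det (I + ψ⁻¹ C) ≥ 1`; in particular both `I + ψ⁻¹ C` and `ψ + C` are invertible. -/
theorem det_one_add_inv_mul_antisymm {n : ℕ} (ψ C : Matrix (Fin n) (Fin n) ℝ)
    (hψ : ψ.PosDef) (hψs : ψᵀ = ψ) (hC : Cᵀ = -C) :
    1 ≤ (1 + ψ⁻¹ * C).det ∧ IsUnit (1 + ψ⁻¹ * C) ∧ IsUnit (ψ + C) :=
  det_one_add_inv_mul_antisymm_general ψ C hψ hC
end

section
/- Let φ be an invertible n×n real matrix. The 2n×2n block matrix g = [[(φ⁻¹)_s, φ⁻¹F/2],[−F(φᵀ)⁻¹/2, φ_s]] with F an antisymmetric n×n matrix is positive-definite if and only if both φ_s and φ_s + (1/4) F (φ_s)⁻¹ F are positive-definite. -/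
/-!
Since the lower-right block `φₛ` is invertible once it is positive-definite, the block matrix is
positive-definite iff `φₛ` and its Schur complement are. For antisymmetric `F` the Schur complement
equals `φ⁻¹ (φₛ + ¼ F φₛ⁻¹ F) (φ⁻¹)ᵀ`, because `(φ⁻¹)ₛ = φ⁻¹ φₛ (φ⁻¹)ᵀ`; a congruence by an
invertible matrix preserves positive-definiteness.
-/

open Matrix

section SchurComplement

open scoped ComplexOrder

variable {𝕜 m n : Type*} [RCLike 𝕜] [Fintype m] [Fintype n] [DecidableEq m] [DecidableEq n]

/-- Positive-definiteness is positive-semidefiniteness plus invertibility, and both are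
inherited by the Schur complement through `det (fromBlocks A B Bᴴ D) = det D * det (A - B D⁻¹ Bᴴ)`. -/
theorem Matrix.PosDef.fromBlocks₂₂_posDef_iff (A : Matrix m m 𝕜) (B : Matrix m n 𝕜)
    {D : Matrix n n 𝕜} (hD : D.PosDef) :
    (fromBlocks A B Bᴴ D).PosDef ↔ (A - B * D⁻¹ * Bᴴ).PosDef := by
  let := hD.isUnit.invertible
  have hdet : (fromBlocks A B Bᴴ D).det = D.det * (A - B * D⁻¹ * Bᴴ).det := by
    rw [det_fromBlocks₂₂, invOf_eq_nonsing_inv]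
  have hsemi := PosDef.fromBlocks₂₂ A B hD
  constructor
  · intro h
    exact (hsemi.1 h.posSemidef).posDef_iff_det_ne_zero.2
      (right_ne_zero_of_mul (hdet ▸ h.det_pos.ne'))
  · intro h
    exact (hsemi.2 h.posSemidef).posDef_iff_det_ne_zero.2
      (hdet ▸ mul_ne_zero hD.det_pos.ne' h.det_pos.ne')

theorem Matrix.posDef_fromBlocks_iff (A : Matrix m m 𝕜) (B : Matrix m n 𝕜) (D : Matrix n n 𝕜) :
    (fromBlocks A B Bᴴ D).PosDef ↔ D.PosDef ∧ (A - B * D⁻¹ * Bᴴ).PosDef := by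
  refine ⟨fun h => ?_, fun ⟨hD, hS⟩ => (hD.fromBlocks₂₂_posDef_iff A B).2 hS⟩
  have hD : D.PosDef := h.submatrix Sum.inr_injective
  exact ⟨hD, (hD.fromBlocks₂₂_posDef_iff A B).1 h⟩

end SchurComplement

section BlockMetric

variable {K n : Type*} [Field K] [Fintype n] [DecidableEq n]

theorem conjTranspose_smul_inv_mul_of_transpose_eq_neg [StarRing K] [TrivialStar K] (c : K)
    (φ : Matrix n n K) {F : Matrix n n K} (hF : Fᵀ = -F) :
    (c • (φ⁻¹ * F))ᴴ = -(c • (F * φᵀ⁻¹)) := by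
  rw [conjTranspose_eq_transpose_of_trivial, transpose_smul, transpose_mul, hF,
    transpose_nonsing_inv, Matrix.neg_mul, smul_neg]

theorem inv_mul_add_transpose_mul_inv_transpose {φ : Matrix n n K} (hφ : IsUnit φ) :
    φ⁻¹ * (φ + φᵀ) * φ⁻¹ᵀ = φ⁻¹ + φ⁻¹ᵀ := by
  have hdet := (isUnit_iff_isUnit_det φ).1 hφ
  rw [Matrix.mul_add, Matrix.add_mul, nonsing_inv_mul φ hdet, Matrix.one_mul, Matrix.mul_assoc,
    ← transpose_mul, nonsing_inv_mul φ hdet, transpose_one, Matrix.mul_one, add_comm]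

theorem symmPart_inv_sub_schur_eq [StarRing K] [TrivialStar K] {φ : Matrix n n K}
    (hφ : IsUnit φ) {F : Matrix n n K} (hF : Fᵀ = -F) (M : Matrix n n K) :
    (1/2 : K) • (φ⁻¹ + φ⁻¹ᵀ) - (1/2 : K) • (φ⁻¹ * F) * M * ((1/2 : K) • (φ⁻¹ * F))ᴴ =
      φ⁻¹ * ((1/2 : K) • (φ + φᵀ) + (1/4 : K) • (F * M * F)) * star φ⁻¹ := by
  rw [conjTranspose_smul_inv_mul_of_transpose_eq_neg _ _ hF, star_eq_conjTranspose,
    conjTranspose_eq_transpose_of_trivial, ← inv_mul_add_transpose_mul_inv_transpose hφ,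
    ← transpose_nonsing_inv]
  simp only [Matrix.mul_add, Matrix.add_mul, Matrix.mul_smul, Matrix.smul_mul, Matrix.mul_neg,
    smul_smul, Matrix.mul_assoc, sub_neg_eq_add, div_mul_div_comm]
  norm_num

end BlockMetric

/-- The block matrix `g = [[(φ⁻¹)ₛ, φ⁻¹F/2],[−F(φᵀ)⁻¹/2, φₛ]]`, with `φ` invertible and
`F` antisymmetric, is positive-definite iff both `φₛ` and `φₛ + (1/4) F (φₛ)⁻¹ F` are
positive-definite. -/
theorem blockMetric_posDef_iff {n : ℕ} (φ F : Matrix (Fin n) (Fin n) ℝ)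
    (hφ : IsUnit φ) (hF : Fᵀ = -F) :
    (Matrix.fromBlocks
        ((1/2 : ℝ) • (φ⁻¹ + (φ⁻¹)ᵀ)) ((1/2 : ℝ) • (φ⁻¹ * F))
        (-((1/2 : ℝ) • (F * (φᵀ)⁻¹))) ((1/2 : ℝ) • (φ + φᵀ))).PosDef ↔
      ((1/2 : ℝ) • (φ + φᵀ)).PosDef ∧
      ((1/2 : ℝ) • (φ + φᵀ) +
        (1/4 : ℝ) • (F * ((1/2 : ℝ) • (φ + φᵀ))⁻¹ * F)).PosDef := by
  rw [← conjTranspose_smul_inv_mul_of_transpose_eq_neg _ _ hF, posDef_fromBlocks_iff,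
    symmPart_inv_sub_schur_eq hφ hF,
    (isUnit_nonsing_inv_iff.2 hφ).posDef_star_right_conjugate_iff]
end

section
/- Let J₊ and J₋ be linear complex structures on a finite-dimensional real vector space V (J₊² = J₋² = −Id) such that J₊ + J₋ is invertible, and let D ⊆ V be a subspace. Then (J₊ − J₋)(J₊ + J₋)⁻¹ D ⊆ D if and only if J₊ D = J₋ D. -/
/-!
Put `K = (J₊ + J₋)⁻¹` and `T = (J₊ - J₋)K`; then `J₊K = (1 + T)/2` and `J₋K = (1 - T)/2`.
If `D` is `T`-invariant, it is invariant under the injective maps `J₊K` and `J₋K`, so by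
dimension both map `D` onto itself, i.e. `KD = J₊⁻¹D = J₊D` and `KD = J₋D` (as `J₊⁻¹ = -J₊`).
Conversely, if `E = J₊D = J₋D`, then `J₊E = J₋E = D`, so `(J₊ + J₋)E ⊆ D`, with equality by
dimension; hence `KD = E` and `TD = (J₊ - J₋)E ⊆ J₊E + J₋E = D`.
-/

open Module Submodule

section Ring

variable {R V : Type*} [Ring R] [AddCommGroup V] [Module R V]

theorem Module.End.injective_of_mul_eq_one {f g : End R V} (h : f * g = 1) :
    Function.Injective g :=
  Function.LeftInverse.injective (g := f) fun x => by
    rw [← Module.End.mul_apply, h, Module.End.one_apply]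

theorem Module.End.injective_of_mul_self_eq_neg_one {J : End R V} (hJ : J * J = -1) :
    Function.Injective J :=
  injective_of_mul_eq_one (f := -J) (by rw [neg_mul, hJ, neg_neg])

theorem Submodule.map_mul_eq_map_map (f g : End R V) (D : Submodule R V) :
    D.map (f * g) = (D.map g).map f := by
  rw [Module.End.mul_eq_comp, map_comp]

theorem Submodule.map_map_of_mul_self_eq_neg_one {J : End R V} (hJ : J * J = -1)
    (D : Submodule R V) : (D.map J).map J = D := by
  rw [← map_mul_eq_map_map, hJ, Submodule.map_neg, Module.End.one_eq_id, map_id]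

theorem Submodule.map_sub_le (f g : End R V) (D : Submodule R V) :
    D.map (f - g) ≤ D.map f ⊔ D.map g := by
  simpa only [sub_eq_add_neg, Submodule.map_neg] using map_add_le (p := D) f (-g)

end Ring

theorem Submodule.map_smul_one_add_smul_le {R V : Type*} [CommRing R] [AddCommGroup V]
    [Module R V] {T : End R V} {D : Submodule R V} (hT : D.map T ≤ D) (a b : R) :
    D.map (a • 1 + b • T) ≤ D := by
  rw [← End.mem_invtSubmodule_iff_map_le] at hT ⊢
  exact End.invtSubmodule_inf_invtSubmodule_le_invtSubmodule_add _ _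
    ⟨End.invtSubmodule_le_invtSubmodule_smul _ a (by simp),
      End.invtSubmodule_le_invtSubmodule_smul _ b hT⟩

section DivisionRing

variable {𝕜 V : Type*} [DivisionRing 𝕜] [AddCommGroup V] [Module 𝕜 V] [FiniteDimensional 𝕜 V]

theorem Submodule.map_eq_of_map_le_of_finrank_le {f : End 𝕜 V} (hf : Function.Injective f)
    {D E : Submodule 𝕜 V} (h : D.map f ≤ E) (hDE : finrank 𝕜 E ≤ finrank 𝕜 D) : D.map f = E :=
  eq_of_le_of_finrank_le h ((equivMapOfInjective f hf D).finrank_eq ▸ hDE)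

theorem Submodule.map_eq_map_of_map_mul_le {J K : End 𝕜 V} (hJ : J * J = -1)
    (hK : Function.Injective K) {D : Submodule 𝕜 V} (h : D.map (J * K) ≤ D) :
    D.map K = D.map J := by
  have hJK : (D.map K).map J = D := by
    rw [← map_mul_eq_map_map]
    exact map_eq_of_map_le_of_finrank_le
      (by simpa only [Module.End.coe_mul] using
        (Module.End.injective_of_mul_self_eq_neg_one hJ).comp hK) h le_rfl
  calc D.map K = ((D.map K).map J).map J := (map_map_of_mul_self_eq_neg_one hJ _).symm
    _ = D.map J := by rw [hJK]

theorem Submodule.map_eq_map_of_mul_add_eq_one {Jp Jm K : End 𝕜 V} (hJp : Jp * Jp = -1)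
    (hJm : Jm * Jm = -1) (hK : K * (Jp + Jm) = 1) {D : Submodule 𝕜 V}
    (h : D.map Jp = D.map Jm) : D.map K = D.map Jp := by
  set E := D.map Jp
  have hJpE : E.map Jp = D := map_map_of_mul_self_eq_neg_one hJp D
  have hJmE : E.map Jm = D := h ▸ map_map_of_mul_self_eq_neg_one hJm D
  have hAE : E.map (Jp + Jm) = D := by
    refine map_eq_of_map_le_of_finrank_le (Module.End.injective_of_mul_eq_one hK) ?_ ?_
    · simpa only [hJpE, hJmE, sup_idem] using map_add_le (p := E) Jp Jm
    · have hJpinj := Module.End.injective_of_mul_self_eq_neg_one hJp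
      exact (equivMapOfInjective _ hJpinj D).finrank_eq.le
  rw [← hAE, ← map_mul_eq_map_map, hK, Module.End.one_eq_id, map_id]

end DivisionRing

/-- Linear-algebra core of Theorem 4.3: for linear complex structures `J₊, J₋` on a
finite-dimensional real vector space with `J₊ + J₋` invertible (with two-sided inverse `K`),
and a subspace `D`, one has `(J₊ − J₋)(J₊ + J₋)⁻¹ D ⊆ D ↔ J₊ D = J₋ D`. -/
theorem antidiagonal_iff_strongHamiltonian {V : Type*} [AddCommGroup V] [Module ℝ V]
    [FiniteDimensional ℝ V] (Jp Jm K : Module.End ℝ V)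
    (hJp : Jp * Jp = -1) (hJm : Jm * Jm = -1)
    (hK1 : (Jp + Jm) * K = 1) (hK2 : K * (Jp + Jm) = 1)
    (D : Submodule ℝ V) :
    Submodule.map ((Jp - Jm) * K) D ≤ D ↔
      Submodule.map Jp D = Submodule.map Jm D := by
  have hK : Function.Injective K := Module.End.injective_of_mul_eq_one hK1
  constructor
  · intro hT
    have hp : Jp * K = (2⁻¹ : ℝ) • 1 + (2⁻¹ : ℝ) • ((Jp - Jm) * K) := by
      rw [← hK1, add_mul, sub_mul]; module
    have hm : Jm * K = (2⁻¹ : ℝ) • 1 + (-2⁻¹ : ℝ) • ((Jp - Jm) * K) := by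
      rw [← hK1, add_mul, sub_mul]; module
    have hpD := hp ▸ map_smul_one_add_smul_le hT _ _
    have hmD := hm ▸ map_smul_one_add_smul_le hT _ _
    rw [← map_eq_map_of_map_mul_le hJp hK hpD, map_eq_map_of_map_mul_le hJm hK hmD]
  · intro h
    rw [map_mul_eq_map_map, map_eq_map_of_mul_add_eq_one hJp hJm hK2 h]
    calc _ ≤ ((D.map Jp).map Jp) ⊔ ((D.map Jm).map Jm) := h ▸ map_sub_le Jp Jm _
      _ = D := by
        rw [map_map_of_mul_self_eq_neg_one hJp, map_map_of_mul_self_eq_neg_one hJm, sup_idem]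
end
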